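/- If xs is a list of odd length, then interleaving the alternating stream lr distributes over concatenation around a single middle element: lr ▷ (xs ++ [z] ++ ys) = (lr ▷ xs) ++ [z] ++ (lr ▷ ys) for all lists ys and elements z. -/
import Mathlib

inductive Turn : Type
  | L
  | R
deriving DecidableEq

open Turn

def inv : Turn → Turn
  | L => R
  | R => L

def interleave {α : Type*} : Stream' α → List α → List α
  | zs, [] => [zs.head]
  | zs, y :: ys => zs.head :: y :: interleave zs.tail ys

infixr:67 " ▷ " => interleave

def lr : Stream' Turn := fun n => if n % 2 = 0 then L else R

def rl : Stream' Turn := fun n => if n % 2 = 0 then R else L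

theorem aux (zs : Stream' Turn) (h : zs.tail.tail = zs) :
    ∀ xs : List Turn, Odd xs.length → ∀ ys z,
      zs ▷ (xs ++ [z] ++ ys) = (zs ▷ xs) ++ [z] ++ (zs ▷ ys)
  | [] => by intro hodd; simp at hodd
  | [a] => by intro _ ys z; simp [interleave, h]
  | a :: b :: t => by
    intro hodd ys z
    have ht : Odd t.length := by
      rcases hodd with ⟨k, hk⟩
      simp at hk
      exact ⟨k - 1, by omega⟩
    have ih := aux zs h t ht ys z
    simp only [List.append_assoc, List.singleton_append] at ih ⊢
    simp [interleave, h, ih]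

theorem interleave_lr_append (xs : List Turn) (hodd : Odd xs.length) :
    ∀ (ys : List Turn) (z : Turn),
      lr ▷ (xs ++ [z] ++ ys) = (lr ▷ xs) ++ [z] ++ (lr ▷ ys) := by
  have h : lr.tail.tail = lr := by
    funext n
    simp only [Stream'.tail, Stream'.get, lr]
    have : (n + 1 + 1) % 2 = n % 2 := by omega
    rw [this]
  exact aux lr h xs hodd
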